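/- (Quantitative core of Theorem 5.1.) Let a, ν, c > 0, K ≥ 0, and A, B ≥ 0, and let (d_n)_{n≥2} be a sequence of nonnegative real numbers such that for every integer m ≥ 1 and every integer n ≥ 2, d_n ≤ A·exp( (c/2)(m+K+2)^a )·n^{−1/2} + B·(m+K+2)^{−ν} + A·exp( c(m+K+2)^a )·n^{−1}. Then there exist a constant C > 0 and an integer n₀, depending only on a, ν, c, K, A, B, such that d_n ≤ C·(log n)^{−ν/a} for all n ≥ n₀. -/

import Mathlib

open Filter

/-- **Quantitative core of Theorem 5.1.** If a sequence of nonnegative errors `d_n`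
satisfies, for every `m ≥ 1` and `n ≥ 2`,
`d_n ≤ A·exp((c/2)(m+K+2)^a)·n^{-1/2} + B·(m+K+2)^{-ν} + A·exp(c(m+K+2)^a)·n^{-1}`,
then `d_n ≤ C·(log n)^{-ν/a}` for some constant `C > 0` and all sufficiently large `n`. -/
theorem log_rate_from_localized_bounds
    (a ν c : ℝ) (ha : 0 < a) (hν : 0 < ν) (hc : 0 < c)
    (K : ℝ) (hK : 0 ≤ K) (A B : ℝ) (hA : 0 ≤ A) (hB : 0 ≤ B)
    (d : ℕ → ℝ) (hd : ∀ n : ℕ, 2 ≤ n → 0 ≤ d n)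
    (hbound : ∀ m : ℕ, 1 ≤ m → ∀ n : ℕ, 2 ≤ n →
      d n ≤ A * Real.exp (c / 2 * ((m : ℝ) + K + 2) ^ a) * (n : ℝ) ^ (-(1/2) : ℝ)
          + B * ((m : ℝ) + K + 2) ^ (-ν)
          + A * Real.exp (c * ((m : ℝ) + K + 2) ^ a) * (n : ℝ) ^ (-1 : ℝ)) :
    ∃ C : ℝ, 0 < C ∧ ∃ n₀ : ℕ, ∀ n : ℕ, n₀ ≤ n →
      d n ≤ C * Real.log n ^ (-(ν / a)) := by
  set C : ℝ := B * ((2 : ℝ) ^ ν * (2 * c) ^ (ν / a)) + 2 * A + 1 with hC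
  have hCpos : 0 < C := by
    have h1 : 0 ≤ B * ((2 : ℝ) ^ ν * (2 * c) ^ (ν / a)) := by positivity
    have h2 : 0 ≤ 2 * A := by linarith
    simp only [hC]; linarith
  refine ⟨C, hCpos, ?_⟩
  -- the auxiliary real function L(x) = (log x / (2c)) ^ (1/a)
  set L : ℝ → ℝ := fun x => (Real.log x / (2 * c)) ^ ((1 : ℝ) / a) with hLdef
  have hLtendsto : Tendsto L atTop atTop := by
    have h1 : Tendsto (fun x : ℝ => Real.log x / (2 * c)) atTop atTop :=
      (Real.tendsto_log_atTop).atTop_div_const (by linarith)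
    exact (tendsto_rpow_atTop (by positivity)).comp h1
  have hcastT : Tendsto (fun n : ℕ => (n : ℝ)) atTop atTop := tendsto_natCast_atTop_atTop
  -- eventual facts
  have hev1 : ∀ᶠ n : ℕ in atTop, (2 : ℕ) ≤ n := eventually_ge_atTop 2
  have hev2 : ∀ᶠ n : ℕ in atTop, K + 3 ≤ L n :=
    hcastT.eventually (hLtendsto.eventually_ge_atTop (K + 3))
  have hev3 : ∀ᶠ n : ℕ in atTop, (2 : ℝ) ≤ L n :=
    hcastT.eventually (hLtendsto.eventually_ge_atTop 2)
  have hev4 : ∀ᶠ n : ℕ in atTop, (Real.log n) ^ (ν / a) ≤ (n : ℝ) ^ ((1 : ℝ) / 4) := by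
    have hlo := isLittleO_log_rpow_rpow_atTop (ν / a) (show (0:ℝ) < 1/4 by norm_num)
    have hb := hlo.bound (show (0:ℝ) < 1 by norm_num)
    have := hcastT.eventually hb
    filter_upwards [this, hev1] with n h hn2
    have hn1 : (1 : ℝ) < (n : ℝ) := by exact_mod_cast Nat.lt_of_lt_of_le one_lt_two hn2
    have hlog : 0 < Real.log n := Real.log_pos hn1
    have h1 : |Real.log n ^ (ν / a)| = Real.log n ^ (ν / a) :=
      abs_of_nonneg (Real.rpow_nonneg hlog.le _)
    have h2 : |(n : ℝ) ^ ((1:ℝ)/4)| = (n : ℝ) ^ ((1:ℝ)/4) :=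
      abs_of_nonneg (Real.rpow_nonneg (by positivity) _)
    rw [Real.norm_eq_abs, Real.norm_eq_abs, one_mul, h1, h2] at h
    exact h
  rw [eventually_atTop] at hev1 hev2 hev3 hev4
  obtain ⟨n1, h1⟩ := hev1; obtain ⟨n2, h2⟩ := hev2
  obtain ⟨n3, h3⟩ := hev3; obtain ⟨n4, h4⟩ := hev4
  refine ⟨max (max n1 n2) (max n3 n4), fun n hn => ?_⟩
  have hn2 : 2 ≤ n := h1 n (le_trans (le_trans (le_max_left _ _) (le_max_left _ _)) hn)
  have hL1 : K + 3 ≤ L n := h2 n (le_trans (le_trans (le_max_right _ _) (le_max_left _ _)) hn)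
  have hL2 : (2 : ℝ) ≤ L n := h3 n (le_trans (le_trans (le_max_left _ _) (le_max_right _ _)) hn)
  have hlogpow : (Real.log n) ^ (ν / a) ≤ (n : ℝ) ^ ((1 : ℝ)/4) :=
    h4 n (le_trans (le_trans (le_max_right _ _) (le_max_right _ _)) hn)
  -- basic positivity
  have hn1R : (1 : ℝ) < (n : ℝ) := by exact_mod_cast Nat.lt_of_lt_of_le one_lt_two hn2
  have hnpos : (0 : ℝ) < (n : ℝ) := by linarith
  have hlog : 0 < Real.log n := Real.log_pos hn1R
  have hxpos : 0 < Real.log n / (2 * c) := by positivity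
  have hLpos : 0 < L n := by simp only [hLdef]; positivity
  -- choice of m
  set m : ℕ := ⌊L n - K - 2⌋₊ with hm
  have hm1 : 1 ≤ m := Nat.le_floor (by push_cast; linarith)
  have hmle : (m : ℝ) ≤ L n - K - 2 := Nat.floor_le (by linarith)
  have hmgt : L n - K - 2 - 1 < (m : ℝ) := Nat.sub_one_lt_floor _
  set R : ℝ := (m : ℝ) + K + 2 with hR
  have hRle : R ≤ L n := by simp only [hR]; linarith
  have hRge : L n / 2 ≤ R := by simp only [hR]; linarith
  have hRpos : 0 < R := by
    have : (1 : ℝ) ≤ (m : ℝ) := by exact_mod_cast hm1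
    simp only [hR]; linarith
  -- key exponent bound
  have hLa : L n ^ a = Real.log n / (2 * c) := by
    simp only [hLdef]
    rw [← Real.rpow_mul hxpos.le, one_div, inv_mul_cancel₀ ha.ne', Real.rpow_one]
  have hRa : R ^ a ≤ Real.log n / (2 * c) := by
    rw [← hLa]
    exact Real.rpow_le_rpow hRpos.le hRle ha.le
  -- bound the first term
  have hterm1 : A * Real.exp (c / 2 * R ^ a) * (n : ℝ) ^ (-(1/2) : ℝ)
      ≤ A * (n : ℝ) ^ (-(1/4) : ℝ) := by
    have hexp1 : Real.exp (c / 2 * R ^ a) ≤ (n : ℝ) ^ ((1:ℝ)/4) := by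
      rw [Real.rpow_def_of_pos hnpos]
      apply Real.exp_le_exp.2
      have : c / 2 * R ^ a ≤ c / 2 * (Real.log n / (2 * c)) :=
        mul_le_mul_of_nonneg_left hRa (by linarith)
      calc c / 2 * R ^ a ≤ c / 2 * (Real.log n / (2 * c)) := this
        _ = Real.log n * (1/4) := by field_simp; ring
    calc A * Real.exp (c / 2 * R ^ a) * (n : ℝ) ^ (-(1/2) : ℝ)
        ≤ A * (n : ℝ) ^ ((1:ℝ)/4) * (n : ℝ) ^ (-(1/2) : ℝ) := by
          apply mul_le_mul_of_nonneg_right (mul_le_mul_of_nonneg_left hexp1 hA)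
          exact Real.rpow_nonneg hnpos.le _
      _ = A * (n : ℝ) ^ (-(1/4) : ℝ) := by
          rw [mul_assoc, ← Real.rpow_add hnpos]; norm_num
  -- bound the third term
  have hterm3 : A * Real.exp (c * R ^ a) * (n : ℝ) ^ (-1 : ℝ)
      ≤ A * (n : ℝ) ^ (-(1/4) : ℝ) := by
    have hexp2 : Real.exp (c * R ^ a) ≤ (n : ℝ) ^ ((1:ℝ)/2) := by
      rw [Real.rpow_def_of_pos hnpos]
      apply Real.exp_le_exp.2
      calc c * R ^ a ≤ c * (Real.log n / (2 * c)) :=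
            mul_le_mul_of_nonneg_left hRa hc.le
        _ = Real.log n * (1/2) := by field_simp
    calc A * Real.exp (c * R ^ a) * (n : ℝ) ^ (-1 : ℝ)
        ≤ A * (n : ℝ) ^ ((1:ℝ)/2) * (n : ℝ) ^ (-1 : ℝ) := by
          apply mul_le_mul_of_nonneg_right (mul_le_mul_of_nonneg_left hexp2 hA)
          exact Real.rpow_nonneg hnpos.le _
      _ = A * (n : ℝ) ^ (-(1/2) : ℝ) := by
          rw [mul_assoc, ← Real.rpow_add hnpos]; norm_num
      _ ≤ A * (n : ℝ) ^ (-(1/4) : ℝ) := by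
          apply mul_le_mul_of_nonneg_left _ hA
          apply Real.rpow_le_rpow_of_exponent_le hn1R.le
          norm_num
  -- bound the middle term
  have hterm2 : B * R ^ (-ν)
      ≤ B * ((2 : ℝ) ^ ν * (2 * c) ^ (ν / a)) * Real.log n ^ (-(ν / a)) := by
    have hL2pos : 0 < L n / 2 := by linarith
    have step1 : R ^ (-ν) ≤ (L n / 2) ^ (-ν) :=
      Real.rpow_le_rpow_of_nonpos hL2pos hRge (by linarith)
    have step2 : (L n / 2) ^ (-ν)
        = (2 : ℝ) ^ ν * (2 * c) ^ (ν / a) * Real.log n ^ (-(ν / a)) := by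
      rw [Real.div_rpow hLpos.le (by norm_num : (0:ℝ) ≤ 2)]
      rw [hLdef]
      rw [← Real.rpow_mul hxpos.le]
      have hexp : 1 / a * (-ν) = -(ν / a) := by field_simp
      rw [hexp]
      rw [Real.div_rpow hlog.le (by positivity : (0:ℝ) ≤ 2 * c)]
      rw [Real.rpow_neg (by norm_num : (0:ℝ) ≤ 2)]
      rw [Real.rpow_neg (by positivity : (0:ℝ) ≤ 2 * c)]
      have h2c : (2 * c : ℝ) ^ (ν / a) ≠ 0 := by positivity
      have h2 : (2 : ℝ) ^ ν ≠ 0 := by positivity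
      field_simp
    rw [mul_assoc]
    exact mul_le_mul_of_nonneg_left (step1.trans_eq step2) hB
  -- combine
  have hlogrpos : 0 < Real.log n ^ (-(ν / a)) := Real.rpow_pos_of_pos hlog _
  have hnquarter : (n : ℝ) ^ (-(1/4) : ℝ) ≤ Real.log n ^ (-(ν / a)) := by
    have h1 : (n : ℝ) ^ (-(1/4) : ℝ) = ((n : ℝ) ^ ((1:ℝ)/4))⁻¹ := by
      rw [← Real.rpow_neg hnpos.le]
    have h2 : Real.log n ^ (-(ν / a)) = (Real.log n ^ (ν / a))⁻¹ := by
      rw [← Real.rpow_neg hlog.le]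
    rw [h1, h2]
    apply inv_anti₀ (Real.rpow_pos_of_pos hlog _) hlogpow
  have hfinal := hbound m hm1 n hn2
  have : d n ≤ B * ((2 : ℝ) ^ ν * (2 * c) ^ (ν / a)) * Real.log n ^ (-(ν / a))
      + 2 * (A * (n : ℝ) ^ (-(1/4) : ℝ)) := by
    calc d n ≤ A * Real.exp (c / 2 * R ^ a) * (n : ℝ) ^ (-(1/2) : ℝ)
          + B * R ^ (-ν) + A * Real.exp (c * R ^ a) * (n : ℝ) ^ (-1 : ℝ) := hfinal
      _ ≤ A * (n : ℝ) ^ (-(1/4) : ℝ)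
          + B * ((2 : ℝ) ^ ν * (2 * c) ^ (ν / a)) * Real.log n ^ (-(ν / a))
          + A * (n : ℝ) ^ (-(1/4) : ℝ) := by
            have := add_le_add (add_le_add hterm1 hterm2) hterm3
            linarith
      _ = B * ((2 : ℝ) ^ ν * (2 * c) ^ (ν / a)) * Real.log n ^ (-(ν / a))
          + 2 * (A * (n : ℝ) ^ (-(1/4) : ℝ)) := by ring
  calc d n ≤ B * ((2 : ℝ) ^ ν * (2 * c) ^ (ν / a)) * Real.log n ^ (-(ν / a))
        + 2 * (A * (n : ℝ) ^ (-(1/4) : ℝ)) := this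
    _ ≤ B * ((2 : ℝ) ^ ν * (2 * c) ^ (ν / a)) * Real.log n ^ (-(ν / a))
        + 2 * (A * Real.log n ^ (-(ν / a))) := by gcongr
    _ ≤ C * Real.log n ^ (-(ν / a)) := by
        simp only [hC]
        nlinarith [hlogrpos.le, mul_nonneg hB (mul_nonneg (Real.rpow_nonneg (by norm_num : (0:ℝ) ≤ 2) ν) (Real.rpow_nonneg (by positivity : (0:ℝ) ≤ 2*c) (ν/a)))]
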